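/- Boundary decomposition identity: with tiles s(x) = ⋂_l E_l^{x_l} in a topological space Σ (each E_l open with E_l = interior(closure(E_l)) and Σ = ⋃_x closure(s(x))), the topological boundary of E_l is contained in the union over unordered pairs {x, y} with x_l ≠ y_l of the sets ∂s(x) ∩ ∂s(y). -/
import Mathlib


/-- Tile `s(x) := ⋂_l E_l^{x_l}` with `E_l^1 = E_l` and `E_l^0 = interior (Σ \ E_l)`. -/
def tile {S : Type*} [TopologicalSpace S] {L : ℕ} (E : Fin L → Set S)
    (x : Fin L → Fin 2) : Set S :=
  ⋂ l, if x l = 1 then E l else interior (Set.univ \ E l)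

def bval {L : ℕ} (x : Fin L → Fin 2) : ℕ := ∑ l, (x l : ℕ) * 2 ^ (l : ℕ)

lemma bval_succ {n : ℕ} (x : Fin (n+1) → Fin 2) :
    bval x = (x 0 : ℕ) + 2 * bval (x ∘ Fin.succ) := by
  unfold bval
  rw [Fin.sum_univ_succ, Finset.mul_sum]
  simp only [Fin.val_zero, pow_zero, mul_one, Function.comp_apply, Fin.val_succ, pow_succ]
  congr 1
  apply Finset.sum_congr rfl
  intro i _
  ring

lemma bval_inj {L : ℕ} : Function.Injective (bval (L := L)) := by
  induction L with
  | zero => intro x y _; funext i; exact i.elim0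
  | succ n ih =>
    intro x y h
    rw [bval_succ, bval_succ] at h
    have hx := (x 0).isLt
    have hy := (y 0).isLt
    have h0 : (x 0 : ℕ) = (y 0 : ℕ) := by omega
    have h1 : bval (x ∘ Fin.succ) = bval (y ∘ Fin.succ) := by omega
    have h2 := ih h1
    funext i
    refine Fin.cases ?_ ?_ i
    · exact Fin.val_injective h0
    · intro j; exact congrFun h2 j

/-- boundary decomposition identity. If each `E_l` is regular open and the
closures of the tiles cover `Σ`, then `∂E_l` is contained in the union, over unordered
pairs `{x, y}` with `x_l ≠ y_l`, of `∂s(x) ∩ ∂s(y)`. -/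
theorem boundary_decomposition {S : Type*} [TopologicalSpace S] {L : ℕ}
    (E : Fin L → Set S)
    (hopen : ∀ l, IsOpen (E l))
    (hreg : ∀ l, E l = interior (closure (E l)))
    (hcover : (⋃ x : Fin L → Fin 2, closure (tile E x)) = Set.univ)
    (l : Fin L) :
    frontier (E l) ⊆
      ⋃ x : Fin L → Fin 2, ⋃ y : Fin L → Fin 2,
        ⋃ (_ : bval x < bval y ∧ x l ≠ y l),
          frontier (tile E x) ∩ frontier (tile E y) := by
  intro p hp
  have hpc : p ∈ closure (E l) := hp.1
  have hpne : p ∉ E l := fun h => hp.2 (by rwa [(hopen l).interior_eq])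
  have hint0 : interior (Set.univ \ E l) = (closure (E l))ᶜ := by
    rw [← Set.compl_eq_univ_diff, interior_compl]
  have hcl0 : closure (interior (Set.univ \ E l)) = (E l)ᶜ := by
    rw [hint0, closure_compl, ← hreg l]
  have htile_open : ∀ z : Fin L → Fin 2, IsOpen (tile E z) := by
    intro z
    apply isOpen_iInter_of_finite
    intro m
    by_cases h : z m = 1 <;> simp [h, hopen m, isOpen_interior]
  have hpnot : ∀ z : Fin L → Fin 2, p ∉ tile E z := by
    intro z hz
    have hm := Set.mem_iInter.mp hz l
    by_cases h : z l = 1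
    · rw [if_pos h] at hm; exact hpne hm
    · rw [if_neg h, hint0] at hm; exact hm hpc
  have hsub1 : ∀ z : Fin L → Fin 2, z l = 1 → closure (tile E z) ⊆ closure (E l) := by
    intro z h
    apply closure_mono
    intro q hq
    have hm := Set.mem_iInter.mp hq l
    rwa [if_pos h] at hm
  have hsub0 : ∀ z : Fin L → Fin 2, z l ≠ 1 → closure (tile E z) ⊆ (E l)ᶜ := by
    intro z h
    have hsub : closure (tile E z) ⊆ closure (interior (Set.univ \ E l)) := by
      apply closure_mono; intro q hq
      have hm := Set.mem_iInter.mp hq l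
      rwa [if_neg h] at hm
    rw [hcl0] at hsub; exact hsub
  have hx : ∃ x : Fin L → Fin 2, x l = 1 ∧ p ∈ closure (tile E x) := by
    have hcov : E l ⊆ ⋃ z ∈ {z : Fin L → Fin 2 | z l = 1}, closure (tile E z) := by
      intro q hq
      have hq2 : q ∈ ⋃ z, closure (tile E z) := hcover ▸ Set.mem_univ q
      obtain ⟨z, hz⟩ := Set.mem_iUnion.mp hq2
      by_cases h : z l = 1
      · exact Set.mem_biUnion h hz
      · exact absurd hq (hsub0 z h hz)
    have hclosed : IsClosed (⋃ z ∈ {z : Fin L → Fin 2 | z l = 1}, closure (tile E z)) :=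
      (Set.toFinite _).isClosed_biUnion (fun z _ => isClosed_closure)
    have hm := (closure_minimal hcov hclosed) hpc
    obtain ⟨z, hz1, hz2⟩ := Set.mem_iUnion₂.mp hm
    exact ⟨z, hz1, hz2⟩
  have hy : ∃ y : Fin L → Fin 2, y l ≠ 1 ∧ p ∈ closure (tile E y) := by
    have hp0 : p ∈ closure (interior (Set.univ \ E l)) := by rw [hcl0]; exact hpne
    have hcov : interior (Set.univ \ E l) ⊆
        ⋃ z ∈ {z : Fin L → Fin 2 | z l ≠ 1}, closure (tile E z) := by
      intro q hq
      have hq' : q ∉ closure (E l) := by rw [hint0] at hq; exact hq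
      have hq2 : q ∈ ⋃ z, closure (tile E z) := hcover ▸ Set.mem_univ q
      obtain ⟨z, hz⟩ := Set.mem_iUnion.mp hq2
      by_cases h : z l = 1
      · exact absurd (hsub1 z h hz) hq'
      · exact Set.mem_biUnion h hz
    have hclosed : IsClosed (⋃ z ∈ {z : Fin L → Fin 2 | z l ≠ 1}, closure (tile E z)) :=
      (Set.toFinite _).isClosed_biUnion (fun z _ => isClosed_closure)
    have hm := (closure_minimal hcov hclosed) hp0
    obtain ⟨z, hz1, hz2⟩ := Set.mem_iUnion₂.mp hm
    exact ⟨z, hz1, hz2⟩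
  obtain ⟨x, hx1, hx2⟩ := hx
  obtain ⟨y, hy1, hy2⟩ := hy
  have hfx : p ∈ frontier (tile E x) := by
    rw [(htile_open x).frontier_eq]; exact ⟨hx2, hpnot x⟩
  have hfy : p ∈ frontier (tile E y) := by
    rw [(htile_open y).frontier_eq]; exact ⟨hy2, hpnot y⟩
  have hxyl : x l ≠ y l := by rw [hx1]; exact fun h => hy1 h.symm
  have hbne : bval x ≠ bval y := fun h => hxyl (congrFun (bval_inj h) l)
  rcases lt_or_gt_of_ne hbne with hlt | hgt
  · exact Set.mem_iUnion.mpr ⟨x, Set.mem_iUnion.mpr ⟨y,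
      Set.mem_iUnion.mpr ⟨⟨hlt, hxyl⟩, hfx, hfy⟩⟩⟩
  · exact Set.mem_iUnion.mpr ⟨y, Set.mem_iUnion.mpr ⟨x,
      Set.mem_iUnion.mpr ⟨⟨hgt, hxyl.symm⟩, hfy, hfx⟩⟩⟩
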